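/- Let N ≥ 1, let S ⊆ ℝ^N be compact, let h ∈ B_S, and let D ⊆ ℝ^N be a bounded measurable set with nonempty interior. Define the sequence f_0 = P_S(χ_D h) and f_{k+1} = T_h^{(D)} f_k for k ≥ 0. Then f_k converges strongly to h in L²(ℝ^N), i.e., ‖f_k − h‖ → 0 as k → ∞. -/

import Mathlib

/-!
The error `x k = f k - h` lies in `B_S` and satisfies `x (k + 1) = P_S (χ_{Dᶜ} x k)`: it is iterated
by the positive contraction `P_S χ_{Dᶜ} P_S`. Hence `⟪x n, x m⟫` depends only on `n + m` and its
real part stays above `inf ‖x k‖²`, which makes `x` a Cauchy sequence; its limit `y` is fixed by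
`P_S χ_{Dᶜ}`, and that forces `χ_D y = 0`. Restricted to any real line, a function bandlimited to a
compact set extends to an entire function, so vanishing on the interior of `D` forces `y = 0`.
-/

open MeasureTheory FourierTransform Filter

noncomputable section

/-- The Hilbert space `L²(ℝᴺ; ℂ)` of square-integrable functions on `ℝᴺ`. -/
abbrev L2Space (N : ℕ) : Type :=
  Lp ℂ 2 (volume : Measure (EuclideanSpace ℝ (Fin N)))

/-- `f ∈ L²(ℝᴺ)` is bandlimited to `S`: its Fourier transform vanishes (a.e.) outside `S`;
equivalently, `f` agrees a.e. with the inverse Fourier transform of an integrable function `F`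
vanishing outside `S`. -/
def IsBandlimited {N : ℕ} (S : Set (EuclideanSpace ℝ (Fin N))) (f : L2Space N) : Prop :=
  ∃ F : EuclideanSpace ℝ (Fin N) → ℂ,
    Integrable F ∧ (∀ k, k ∉ S → F k = 0) ∧
      (f : EuclideanSpace ℝ (Fin N) → ℂ) =ᵐ[volume] 𝓕⁻ F

/-- Multiplication of `f ∈ L²` by the indicator function `χ_D`, as an element of `L²`. -/
def chiMul {N : ℕ} {D : Set (EuclideanSpace ℝ (Fin N))} (hD : MeasurableSet D)
    (f : L2Space N) : L2Space N :=
  ((Lp.memLp f).indicator hD).toLp (D.indicator f)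

/-- The orthogonal projection of `L²(ℝᴺ)` onto a closed subspace `K`. -/
def projOf {N : ℕ} (K : Submodule ℂ (L2Space N)) (hK : IsClosed (K : Set (L2Space N))) :
    L2Space N → L2Space N :=
  haveI : CompleteSpace K := hK.completeSpace_coe
  fun f => (K.orthogonalProjectionOnto f : L2Space N)

/-- The operator `T_h^{(D)} f = P_S (f + χ_D (h − f))` (single region). -/
def Tsingle {N : ℕ} (K : Submodule ℂ (L2Space N)) (hK : IsClosed (K : Set (L2Space N)))
    {D : Set (EuclideanSpace ℝ (Fin N))} (hD : MeasurableSet D)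
    (h f : L2Space N) : L2Space N :=
  projOf K hK (f + chiMul hD (h - f))

open Topology Complex
open scoped InnerProductSpace

section IterateConvergence

variable {𝕜 E : Type*} [RCLike 𝕜] [NormedAddCommGroup E] [InnerProductSpace 𝕜 E]

theorem inner_add_left_eq_inner_add_right {x : ℕ → E}
    (hsymm : ∀ n m, ⟪x (n + 1), x m⟫_𝕜 = ⟪x n, x (m + 1)⟫_𝕜) (j n m : ℕ) :
    ⟪x (n + j), x m⟫_𝕜 = ⟪x n, x (m + j)⟫_𝕜 := by
  induction j generalizing n m with
  | zero => rfl
  | succ j ih => rw [← add_assoc, hsymm, ih, add_right_comm, add_assoc]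

theorem exists_norm_sq_le_re_inner {x : ℕ → E}
    (hsymm : ∀ n m, ⟪x (n + 1), x m⟫_𝕜 = ⟪x n, x (m + 1)⟫_𝕜)
    (hquad : ∀ n, ‖x (n + 1)‖ ^ 2 ≤ RCLike.re ⟪x (n + 1), x n⟫_𝕜) {n m : ℕ} (hnm : n ≤ m) :
    ∃ k, ‖x k‖ ^ 2 ≤ RCLike.re ⟪x n, x m⟫_𝕜 := by
  obtain ⟨r, hr⟩ | ⟨r, hr⟩ := Nat.even_or_odd (m - n)
  · refine ⟨n + r, ?_⟩
    rw [show m = n + r + r by omega, ← inner_add_left_eq_inner_add_right hsymm,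
      inner_self_eq_norm_sq]
  · refine ⟨n + r + 1, ?_⟩
    rw [show m = n + r + (r + 1) by omega, ← inner_add_left_eq_inner_add_right hsymm,
      ← add_assoc]
    exact hquad _

theorem norm_succ_le_of_norm_sq_le_re_inner {x : ℕ → E}
    (hquad : ∀ n, ‖x (n + 1)‖ ^ 2 ≤ RCLike.re ⟪x (n + 1), x n⟫_𝕜) (n : ℕ) :
    ‖x (n + 1)‖ ≤ ‖x n‖ := by
  have h := (hquad n).trans ((RCLike.re_le_norm _).trans (norm_inner_le_norm (x (n + 1)) (x n)))
  nlinarith [norm_nonneg (x n), norm_nonneg (x (n + 1))]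

/-- `‖x n - x m‖² = ‖x n‖² + ‖x m‖² - 2 Re ⟪x n, x m⟫`, and for `n ≤ m` the real part dominates
some `‖x k‖²`, hence the limit of the decreasing sequence `‖x k‖²`. -/
theorem cauchySeq_of_inner_succ_symm {x : ℕ → E}
    (hsymm : ∀ n m, ⟪x (n + 1), x m⟫_𝕜 = ⟪x n, x (m + 1)⟫_𝕜)
    (hquad : ∀ n, ‖x (n + 1)‖ ^ 2 ≤ RCLike.re ⟪x (n + 1), x n⟫_𝕜) : CauchySeq x := by
  set b : ℕ → ℝ := fun n => ‖x n‖ ^ 2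
  have hb_anti : Antitone b := antitone_nat_of_succ_le fun n =>
    pow_le_pow_left₀ (norm_nonneg _) (norm_succ_le_of_norm_sq_le_re_inner hquad n) 2
  have hb_bdd : BddBelow (Set.range b) := ⟨0, by rintro _ ⟨n, rfl⟩; positivity⟩
  set L := ⨅ n, b n
  have hbL : Tendsto b atTop (𝓝 L) := tendsto_atTop_ciInf hb_anti hb_bdd
  refine cauchySeq_of_le_tendsto_0' (fun n => √(2 * (b n - L))) (fun n m hnm => ?_) ?_
  · obtain ⟨k, hk⟩ := exists_norm_sq_le_re_inner hsymm hquad hnm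
    have hLk : L ≤ b k := ciInf_le hb_bdd k
    rw [dist_eq_norm, Real.le_sqrt (norm_nonneg _) (by linarith [ciInf_le hb_bdd n]),
      @norm_sub_sq 𝕜]
    linarith [hb_anti hnm]
  · simpa using ((hbL.sub_const L).const_mul 2).sqrt

theorem norm_sq_eq_norm_sq_add_norm_sub_sq {Q : E → E}
    (hQ : ∀ u v, ⟪Q u, v⟫_𝕜 = ⟪Q u, Q v⟫_𝕜) (u : E) :
    ‖u‖ ^ 2 = ‖Q u‖ ^ 2 + ‖u - Q u‖ ^ 2 := by
  have horth : ⟪Q u, u - Q u⟫_𝕜 = 0 := by rw [inner_sub_right, hQ, sub_self]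
  simpa [sq] using norm_add_sq_eq_norm_sq_add_norm_sq_of_inner_eq_zero _ _ horth

/-- `hQ` says that `Q` is an orthogonal projection onto its range, so `x` is iterated by the
positive contraction `P Q P` on `K`. -/
theorem exists_tendsto_starProjection_iterate [CompleteSpace E] (K : Submodule 𝕜 E)
    [K.HasOrthogonalProjection] {Q : E → E} (hQ : ∀ u v, ⟪Q u, v⟫_𝕜 = ⟪Q u, Q v⟫_𝕜)
    (hQc : Continuous Q) {x : ℕ → E} (hx0 : x 0 ∈ K)
    (hx : ∀ n, x (n + 1) = K.starProjection (Q (x n))) :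
    ∃ y ∈ K, Q y = y ∧ Tendsto x atTop (𝓝 y) := by
  have hxK : ∀ n, x n ∈ K
    | 0 => hx0
    | n + 1 => hx n ▸ K.starProjection_apply_mem _
  have hinner : ∀ n m, ⟪x (n + 1), x m⟫_𝕜 = ⟪Q (x n), Q (x m)⟫_𝕜 := fun n m => by
    rw [hx, K.inner_starProjection_left_eq_right, K.starProjection_eq_self_iff.mpr (hxK m), hQ]
  have hsymm : ∀ n m, ⟪x (n + 1), x m⟫_𝕜 = ⟪x n, x (m + 1)⟫_𝕜 := fun n m => by
    rw [hinner, ← inner_conj_symm (x n), hinner, inner_conj_symm]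
  have hquad : ∀ n, ‖x (n + 1)‖ ^ 2 ≤ RCLike.re ⟪x (n + 1), x n⟫_𝕜 := fun n => by
    rw [hinner, inner_self_eq_norm_sq, hx]
    exact pow_le_pow_left₀ (norm_nonneg _) (K.norm_starProjection_apply_le _) 2
  obtain ⟨y, hy⟩ := cauchySeq_tendsto_of_complete (cauchySeq_of_inner_succ_symm hsymm hquad)
  have hy_fix : K.starProjection (Q y) = y := by
    refine tendsto_nhds_unique ?_ (hy.comp (tendsto_add_atTop_nat 1))
    simpa only [Function.comp_def, hx] using
      ((K.starProjection.continuous.comp hQc).tendsto y).comp hy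
  refine ⟨y, hy_fix ▸ K.starProjection_apply_mem _, ?_, hy⟩
  have hle : ‖y‖ ≤ ‖Q y‖ := by simpa only [hy_fix] using K.norm_starProjection_apply_le (Q y)
  have hpyth := norm_sq_eq_norm_sq_add_norm_sub_sq hQ y
  have hdefect : ‖y - Q y‖ ^ 2 = 0 := by
    nlinarith [norm_nonneg y, norm_nonneg (Q y), sq_nonneg ‖y - Q y‖]
  simpa [sub_eq_zero, eq_comm] using hdefect

end IterateConvergence

theorem norm_cexp_mul_mul_le {α : Type*} {F g : α → ℂ} {C : ℝ} (hgC : ∀ a, F a ≠ 0 → ‖g a‖ ≤ C)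
    (z : ℂ) (a : α) : ‖cexp (z * g a) * F a‖ ≤ Real.exp (‖z‖ * C) * ‖F a‖ := by
  rcases eq_or_ne (F a) 0 with ha | ha
  · simp [ha]
  rw [norm_mul]
  gcongr
  calc ‖cexp (z * g a)‖ ≤ Real.exp ‖z * g a‖ := norm_exp_le_exp_norm _
    _ ≤ Real.exp (‖z‖ * C) := by rw [norm_mul]; gcongr; exact hgC a ha

theorem differentiable_integral_cexp_mul {α : Type*} [MeasurableSpace α] {μ : Measure α}
    {F g : α → ℂ} (hF : Integrable F μ) (hg : AEStronglyMeasurable g μ) {C : ℝ}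
    (hgC : ∀ a, F a ≠ 0 → ‖g a‖ ≤ C) :
    Differentiable ℂ fun z => ∫ a, cexp (z * g a) * F a ∂μ := by
  intro z₀
  have hmeas : ∀ z : ℂ, AEStronglyMeasurable (fun a => cexp (z * g a) * F a) μ := fun z =>
    (continuous_exp.comp_aestronglyMeasurable (hg.const_mul z)).mul hF.1
  have hderiv_bound : ∀ a, ∀ z ∈ Metric.ball z₀ 1,
      ‖g a * (cexp (z * g a) * F a)‖ ≤ C * (Real.exp ((‖z₀‖ + 1) * C) * ‖F a‖) := by
    intro a z hz
    rcases eq_or_ne (F a) 0 with ha | ha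
    · simp [ha]
    have hC : 0 ≤ C := (norm_nonneg _).trans (hgC a ha)
    have hz' : ‖z‖ ≤ ‖z₀‖ + 1 := by
      linarith [norm_le_norm_add_norm_sub' z z₀, mem_ball_iff_norm.mp hz]
    rw [norm_mul]
    gcongr
    · exact hgC a ha
    · exact (norm_cexp_mul_mul_le hgC z a).trans (by gcongr)
  refine (hasDerivAt_integral_of_dominated_loc_of_deriv_le (Metric.ball_mem_nhds z₀ one_pos)
    (Eventually.of_forall hmeas)
    ((hF.norm.const_mul _).mono' (hmeas z₀) (Eventually.of_forall (norm_cexp_mul_mul_le hgC z₀)))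
    (hg.mul (hmeas z₀)) (Eventually.of_forall hderiv_bound) ((hF.norm.const_mul _).const_mul _)
    (Eventually.of_forall fun a z _ => ?_)).2.differentiableAt
  exact ((hasDerivAt_mul_const (g a)).cexp.mul_const (F a)).congr_deriv (by ring)

theorem Differentiable.eq_zero_of_eventually_ofReal {G : ℂ → ℂ} (hG : Differentiable ℂ G)
    {t₀ : ℝ} (h0 : ∀ᶠ t : ℝ in 𝓝 t₀, G t = 0) : G = 0 := by
  have hmaps : Set.MapsTo ((↑) : ℝ → ℂ) {t₀}ᶜ {(t₀ : ℂ)}ᶜ := fun t ht => by simpa using ht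
  have hfreq : ∃ᶠ z in 𝓝[≠] (t₀ : ℂ), G z = 0 :=
    (continuous_ofReal.continuousWithinAt.tendsto_nhdsWithin hmaps).frequently
      (h0.filter_mono nhdsWithin_le_nhds).frequently
  funext z
  exact (hG.differentiableOn.analyticOnNhd isOpen_univ)
    |>.eqOn_zero_of_preconnected_of_frequently_eq_zero isPreconnected_univ (Set.mem_univ _) hfreq
      (Set.mem_univ z)

section FourierLine

variable {V : Type*} [NormedAddCommGroup V] [InnerProductSpace ℝ V] [MeasurableSpace V]
  [BorelSpace V] [FiniteDimensional ℝ V]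

theorem exists_differentiable_eq_fourierInv_line {S : Set V} (hS : Bornology.IsBounded S)
    {F : V → ℂ} (hF : Integrable F) (hsupp : ∀ k, k ∉ S → F k = 0) (x₀ v : V) :
    ∃ G : ℂ → ℂ, Differentiable ℂ G ∧ ∀ t : ℝ, G t = 𝓕⁻ F (x₀ + t • v) := by
  obtain ⟨B, hB⟩ := hS.exists_norm_le
  set phase : V → ℂ := fun k => cexp (↑(2 * Real.pi * ⟪k, x₀⟫_ℝ) * I) * F k
  have hphase : Integrable phase :=
    hF.norm.mono' ((by fun_prop : Continuous fun k : V => cexp (↑(2 * Real.pi * ⟪k, x₀⟫_ℝ) * I))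
      |>.aestronglyMeasurable.mul hF.1)
      (Eventually.of_forall fun k => by
        simp only [phase, norm_mul, norm_exp_ofReal_mul_I, one_mul, le_refl])
  refine ⟨fun z => ∫ k, cexp (z * (↑(2 * Real.pi * ⟪k, v⟫_ℝ) * I)) * phase k, ?_, fun t => ?_⟩
  · refine differentiable_integral_cexp_mul (C := 2 * Real.pi * (B * ‖v‖)) hphase
      (by fun_prop : Continuous _).aestronglyMeasurable fun k hk => ?_
    have hkS : k ∈ S := by_contra fun hkS => hk (by simp [phase, hsupp k hkS])
    rw [norm_mul, norm_I, mul_one, norm_real, Real.norm_eq_abs, abs_mul,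
      abs_of_pos Real.two_pi_pos]
    gcongr
    exact (abs_real_inner_le_norm k v).trans (by gcongr; exact hB k hkS)
  · rw [Real.fourierInv_eq']
    refine integral_congr_ae (Eventually.of_forall fun k => ?_)
    dsimp only [phase]
    rw [smul_eq_mul, ← mul_assoc, ← Complex.exp_add, inner_add_right, real_inner_smul_right]
    push_cast
    ring_nf

theorem fourierInv_eq_zero_of_eqOn_zero {S : Set V} (hS : Bornology.IsBounded S) {F : V → ℂ}
    (hF : Integrable F) (hsupp : ∀ k, k ∉ S → F k = 0) {U : Set V} (hU : IsOpen U)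
    (hUne : U.Nonempty) (h0 : Set.EqOn (𝓕⁻ F) 0 U) : 𝓕⁻ F = 0 := by
  obtain ⟨x₀, hx₀⟩ := hUne
  funext y
  obtain ⟨G, hG, hG_line⟩ := exists_differentiable_eq_fourierInv_line hS hF hsupp x₀ (y - x₀)
  have hline : Tendsto (fun t : ℝ => x₀ + t • (y - x₀)) (𝓝 0) (𝓝 x₀) := by
    simpa using (by fun_prop : Continuous fun t : ℝ => x₀ + t • (y - x₀)).tendsto 0
  have hG0 : ∀ᶠ t : ℝ in 𝓝 0, G t = 0 := by
    filter_upwards [hline (hU.mem_nhds hx₀)] with t ht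
    rw [hG_line]
    exact h0 ht
  have hG1 := hG_line 1
  rw [ofReal_one, one_smul, add_sub_cancel] at hG1
  rw [← hG1]
  exact congrFun (hG.eq_zero_of_eventually_ofReal hG0) 1

end FourierLine

section chiMul

variable {N : ℕ} {D : Set (EuclideanSpace ℝ (Fin N))} (hD : MeasurableSet D)

theorem coeFn_chiMul (f : L2Space N) :
    (chiMul hD f : EuclideanSpace ℝ (Fin N) → ℂ) =ᵐ[volume] D.indicator f :=
  MemLp.coeFn_toLp _

theorem inner_chiMul_left (f g : L2Space N) :
    ⟪chiMul hD f, g⟫_ℂ = ⟪chiMul hD f, chiMul hD g⟫_ℂ := by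
  simp only [L2.inner_def]
  refine integral_congr_ae ?_
  filter_upwards [coeFn_chiMul hD f, coeFn_chiMul hD g] with a hf hg
  by_cases ha : a ∈ D <;> simp [hf, hg, ha]

theorem lipschitzWith_chiMul : LipschitzWith 1 (chiMul hD (N := N)) := by
  refine LipschitzWith.of_edist_le fun f g => ?_
  simp only [Lp.edist_def]
  calc eLpNorm (⇑(chiMul hD f) - ⇑(chiMul hD g)) 2 volume
      = eLpNorm (D.indicator (⇑f - ⇑g)) 2 volume := by
        refine eLpNorm_congr_ae ?_
        filter_upwards [coeFn_chiMul hD f, coeFn_chiMul hD g] with a hf hg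
        by_cases ha : a ∈ D <;> simp [hf, hg, ha]
    _ ≤ eLpNorm (⇑f - ⇑g) 2 volume := eLpNorm_indicator_le _

theorem add_chiMul_sub (f h : L2Space N) :
    f + chiMul hD (h - f) = h + chiMul hD.compl (f - h) := by
  refine Lp.ext ?_
  filter_upwards [Lp.coeFn_add f (chiMul hD (h - f)), Lp.coeFn_add h (chiMul hD.compl (f - h)),
    coeFn_chiMul hD (h - f), coeFn_chiMul hD.compl (f - h), Lp.coeFn_sub h f,
    Lp.coeFn_sub f h] with a hl hr hD' hDc hhf hfh
  rw [hl, hr, Pi.add_apply, Pi.add_apply, hD', hDc]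
  by_cases ha : a ∈ D
  · rw [Set.indicator_of_mem ha, Set.indicator_of_notMem (Set.notMem_compl_iff.mpr ha), hhf,
      Pi.sub_apply]
    ring
  · rw [Set.indicator_of_notMem ha, Set.indicator_of_mem (Set.mem_compl ha), hfh, Pi.sub_apply]
    ring

theorem ae_eq_zero_of_chiMul_compl_eq {y : L2Space N} (hy : chiMul hD.compl y = y) :
    ∀ᵐ a, a ∈ D → y a = 0 := by
  filter_upwards [hy ▸ coeFn_chiMul hD.compl y] with a ha haD
  rw [ha, Set.indicator_of_notMem (Set.notMem_compl_iff.mpr haD)]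

end chiMul

theorem IsBandlimited.eq_zero_of_ae_eq_zero_on {N : ℕ} {S : Set (EuclideanSpace ℝ (Fin N))}
    (hS : Bornology.IsBounded S) {y : L2Space N} (hy : IsBandlimited S y)
    {U : Set (EuclideanSpace ℝ (Fin N))} (hU : IsOpen U) (hUne : U.Nonempty)
    (h0 : ∀ᵐ a, a ∈ U → y a = 0) : y = 0 := by
  obtain ⟨F, hF, hsupp, hyF⟩ := hy
  have hcont : Continuous (𝓕⁻ F) :=
    VectorFourier.fourierIntegral_continuous Real.continuous_fourierChar
      (by simp only [LinearMap.neg_apply, innerₗ_apply_apply]; exact continuous_inner.neg) hF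
  have hU0 : Set.EqOn (𝓕⁻ F) 0 U := by
    refine volume.eqOn_open_of_ae_eq ?_ hU hcont.continuousOn continuousOn_const
    refine (ae_restrict_iff' hU.measurableSet).mpr ?_
    filter_upwards [h0, hyF] with a ha hya haU
    rw [← hya]
    exact ha haU
  have hFinv := fourierInv_eq_zero_of_eqOn_zero hS hF hsupp hU hUne hU0
  exact Lp.eq_zero_iff_ae_eq_zero.mpr (hyF.trans (by rw [hFinv]))

theorem projOf_eq_starProjection {N : ℕ} (K : Submodule ℂ (L2Space N))
    (hK : IsClosed (K : Set (L2Space N))) [CompleteSpace K] (u : L2Space N) :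
    projOf K hK u = K.starProjection u :=
  rfl

theorem iterates_tendsto_single_general (N : ℕ)
    (S : Set (EuclideanSpace ℝ (Fin N))) (hS : IsCompact S)
    (K : Submodule ℂ (L2Space N))
    (hKset : (K : Set (L2Space N)) = {f : L2Space N | IsBandlimited S f})
    (hK : IsClosed (K : Set (L2Space N)))
    (h : L2Space N) (hh : IsBandlimited S h)
    (D : Set (EuclideanSpace ℝ (Fin N))) (hD : MeasurableSet D)
    (hDint : (interior D).Nonempty)
    (f : ℕ → L2Space N) (hf0 : f 0 = projOf K hK (chiMul hD h))
    (hfrec : ∀ k : ℕ, f (k + 1) = Tsingle K hK hD h (f k)) :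
    Tendsto (fun k => ‖f k - h‖) atTop (nhds 0) := by
  have : CompleteSpace K := hK.completeSpace_coe
  have hmem : ∀ g, g ∈ K ↔ IsBandlimited S g := fun g => Set.ext_iff.mp hKset g
  have hhK : h ∈ K := (hmem h).mpr hh
  have hx0 : f 0 - h ∈ K := K.sub_mem (hf0 ▸ K.starProjection_apply_mem _) hhK
  have hx : ∀ n, f (n + 1) - h = K.starProjection (chiMul hD.compl (f n - h)) := fun n => by
    rw [hfrec, Tsingle, projOf_eq_starProjection, add_chiMul_sub, map_add,
      K.starProjection_eq_self_iff.mpr hhK, add_sub_cancel_left]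
  obtain ⟨y, hyK, hy_fix, hxy⟩ := exists_tendsto_starProjection_iterate K
    (inner_chiMul_left hD.compl) (lipschitzWith_chiMul hD.compl).continuous
    (x := fun n => f n - h) hx0 hx
  have hy0 : y = 0 := ((hmem y).mp hyK).eq_zero_of_ae_eq_zero_on hS.isBounded isOpen_interior
    hDint <| (ae_eq_zero_of_chiMul_compl_eq hD hy_fix).mono fun a ha haD =>
      ha (interior_subset haD)
  simpa [hy0] using hxy.norm

/-- For `h ∈ B_S` and `D` a bounded measurable set with nonempty interior,
the iterates `f_0 = P_S(χ_D h)`, `f_{k+1} = T_h^{(D)} f_k` converge strongly to `h`: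
`‖f_k − h‖ → 0`. -/
theorem iterates_tendsto_single (N : ℕ) (hN : 1 ≤ N)
    (S : Set (EuclideanSpace ℝ (Fin N))) (hS : IsCompact S)
    (K : Submodule ℂ (L2Space N))
    (hKset : (K : Set (L2Space N)) = {f : L2Space N | IsBandlimited S f})
    (hK : IsClosed (K : Set (L2Space N)))
    (h : L2Space N) (hh : IsBandlimited S h)
    (D : Set (EuclideanSpace ℝ (Fin N))) (hD : MeasurableSet D)
    (hDbdd : Bornology.IsBounded D) (hDint : (interior D).Nonempty)
    (f : ℕ → L2Space N) (hf0 : f 0 = projOf K hK (chiMul hD h))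
    (hfrec : ∀ k : ℕ, f (k + 1) = Tsingle K hK hD h (f k)) :
    Tendsto (fun k => ‖f k - h‖) atTop (nhds 0) :=
  iterates_tendsto_single_general N S hS K hKset hK h hh D hD hDint f hf0 hfrec
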